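/- arXiv:1902.09841 — 4 statements merged into one kernel-verified Lean document; each statement's English description precedes it below -/
import Mathlib

section
/- Let R be the m×m matrix with first row all 1s, R[i][j] = 2 for 1 ≤ i ≤ j, and 0 otherwise, and let S be the subdiagonal shift matrix. Then every entry of R + S·R^k strictly above or on the first subdiagonal is positive; consequently, for any k ≥ 1, the matrix P' = R^{k+1} + Σ_{m=1}^{k+1} Σ_{l=1}^{m} C(m-1, l-1) S^l R^{k+1-m} satisfies: (P')^N has all entries strictly positive for every N ≥ m-1 ≥ 1, i.e., P' is a primitive matrix. -/
open Finset

/-- The matrix `R`: first row all 1s, entry 2 for `1 ≤ i ≤ j`, 0 otherwise. -/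
def Rmat (m : ℕ) : Matrix (Fin m) (Fin m) ℚ :=
  fun i j => if (i : ℕ) = 0 then 1 else if (i : ℕ) ≤ (j : ℕ) then 2 else 0

/-- The subdiagonal shift matrix `S`: entry 1 iff `i = j + 1`, else 0. -/
def Smat (m : ℕ) : Matrix (Fin m) (Fin m) ℚ :=
  fun i j => if (i : ℕ) = (j : ℕ) + 1 then 1 else 0

/-- The production matrix
`P' = R^{k+1} + Σ_{m=1}^{k+1} Σ_{l=1}^{m} C(m-1,l-1) S^l R^{k+1-m}`. -/
def Pmat' (m k : ℕ) : Matrix (Fin m) (Fin m) ℚ :=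
  (Rmat m) ^ (k + 1) +
    ∑ mm ∈ Icc 1 (k + 1), ∑ l ∈ Icc 1 mm,
      ((mm - 1).choose (l - 1) : ℚ) • ((Smat m) ^ l * (Rmat m) ^ (k + 1 - mm))

lemma Rmat_nonneg (m : ℕ) (i j : Fin m) : 0 ≤ Rmat m i j := by
  unfold Rmat; split_ifs <;> norm_num

lemma Smat_nonneg (m : ℕ) (i j : Fin m) : 0 ≤ Smat m i j := by
  unfold Smat; split_ifs <;> norm_num

lemma mul_entry_nonneg {m : ℕ} {A B : Matrix (Fin m) (Fin m) ℚ}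
    (hA : ∀ i j, 0 ≤ A i j) (hB : ∀ i j, 0 ≤ B i j) (i j : Fin m) :
    0 ≤ (A * B) i j := by
  rw [Matrix.mul_apply]
  exact Finset.sum_nonneg fun t _ => mul_nonneg (hA i t) (hB t j)

lemma mul_entry_pos {m : ℕ} {A B : Matrix (Fin m) (Fin m) ℚ}
    (hA : ∀ i j, 0 ≤ A i j) (hB : ∀ i j, 0 ≤ B i j) (i j t : Fin m)
    (h1 : 0 < A i t) (h2 : 0 < B t j) : 0 < (A * B) i j := by
  rw [Matrix.mul_apply]
  exact Finset.sum_pos' (fun x _ => mul_nonneg (hA i x) (hB x j))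
    ⟨t, Finset.mem_univ t, mul_pos h1 h2⟩

lemma pow_entry_nonneg {m : ℕ} {A : Matrix (Fin m) (Fin m) ℚ}
    (hA : ∀ i j, 0 ≤ A i j) (n : ℕ) (i j : Fin m) : 0 ≤ (A ^ n) i j := by
  induction n generalizing i j with
  | zero =>
    simp only [pow_zero, Matrix.one_apply]
    split_ifs <;> norm_num
  | succ n ih =>
    rw [pow_succ]
    exact mul_entry_nonneg ih hA i j

lemma Rmat_pos {m : ℕ} (i j : Fin m) (h : (i : ℕ) ≤ (j : ℕ)) : 0 < Rmat m i j := by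
  unfold Rmat
  split_ifs <;> first | norm_num | omega

lemma Rpow_pos {m : ℕ} (n : ℕ) (hn : 1 ≤ n) (i j : Fin m) (h : (i : ℕ) ≤ (j : ℕ)) :
    0 < ((Rmat m) ^ n) i j := by
  induction n generalizing i j with
  | zero => omega
  | succ n ih =>
    rcases Nat.eq_or_lt_of_le hn with h1 | h1
    · rw [← h1, pow_one]; exact Rmat_pos i j h
    · rw [pow_succ]
      exact mul_entry_pos (pow_entry_nonneg (Rmat_nonneg m) n) (Rmat_nonneg m) i j i
        (ih (by omega) i i le_rfl) (Rmat_pos i j h)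

lemma Pmat'_nonneg (m k : ℕ) (i j : Fin m) : 0 ≤ Pmat' m k i j := by
  unfold Pmat'
  rw [Matrix.add_apply]
  refine add_nonneg (pow_entry_nonneg (Rmat_nonneg m) _ i j) ?_
  rw [Matrix.sum_apply]
  refine Finset.sum_nonneg fun mm _ => ?_
  rw [Matrix.sum_apply]
  refine Finset.sum_nonneg fun l _ => ?_
  rw [Matrix.smul_apply]
  exact mul_nonneg (by positivity)
    (mul_entry_nonneg (pow_entry_nonneg (Smat_nonneg m) l)
      (pow_entry_nonneg (Rmat_nonneg m) _) i j)

lemma Pmat'_pos (m k : ℕ) (hk : 1 ≤ k) (i j : Fin m) (h : (i : ℕ) ≤ (j : ℕ) + 1) :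
    0 < Pmat' m k i j := by
  unfold Pmat'
  rw [Matrix.add_apply]
  rcases Nat.lt_or_ge (i : ℕ) ((j : ℕ) + 1) with h1 | h1
  · refine add_pos_of_pos_of_nonneg (Rpow_pos (k + 1) (by omega) i j (by omega)) ?_
    rw [Matrix.sum_apply]
    refine Finset.sum_nonneg fun mm _ => ?_
    rw [Matrix.sum_apply]
    refine Finset.sum_nonneg fun l _ => ?_
    rw [Matrix.smul_apply]
    exact mul_nonneg (by positivity)
      (mul_entry_nonneg (pow_entry_nonneg (Smat_nonneg m) l)
        (pow_entry_nonneg (Rmat_nonneg m) _) i j)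
  · have hij : (i : ℕ) = (j : ℕ) + 1 := by omega
    refine add_pos_of_nonneg_of_pos (pow_entry_nonneg (Rmat_nonneg m) _ i j) ?_
    rw [Matrix.sum_apply]
    refine Finset.sum_pos' (fun mm _ => ?_) ⟨1, by simp, ?_⟩
    · rw [Matrix.sum_apply]
      refine Finset.sum_nonneg fun l _ => ?_
      rw [Matrix.smul_apply]
      exact mul_nonneg (by positivity)
        (mul_entry_nonneg (pow_entry_nonneg (Smat_nonneg m) l)
          (pow_entry_nonneg (Rmat_nonneg m) _) i j)
    · rw [Matrix.sum_apply]
      have : Finset.Icc 1 1 = {1} := rfl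
      rw [this, Finset.sum_singleton, Matrix.smul_apply]
      simp only [Nat.choose_self, Nat.cast_one, one_smul, pow_one]
      have hS : 0 < Smat m i j := by
        unfold Smat; rw [if_pos hij]; norm_num
      exact mul_entry_pos (Smat_nonneg m) (pow_entry_nonneg (Rmat_nonneg m) _) i j j hS
        (Rpow_pos (k + 1 - 1) (by omega) j j le_rfl)

lemma Ppow_pos (m k : ℕ) (hk : 1 ≤ k) :
    ∀ N : ℕ, 1 ≤ N → ∀ i j : Fin m, (i : ℕ) ≤ (j : ℕ) + N → 0 < ((Pmat' m k) ^ N) i j := by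
  intro N hN
  induction N with
  | zero => omega
  | succ N ih =>
    intro i j hij
    rcases Nat.eq_or_lt_of_le hN with h1 | h1
    · rw [← h1, pow_one]
      exact Pmat'_pos m k hk i j (by omega)
    · have hN1 : 1 ≤ N := by omega
      rw [pow_succ]
      rcases le_or_gt (i : ℕ) N with h2 | h2
      · have hm : 0 < m := i.pos
        refine mul_entry_pos (pow_entry_nonneg (Pmat'_nonneg m k) N) (Pmat'_nonneg m k)
          i j ⟨0, hm⟩ (ih hN1 i ⟨0, hm⟩ (by simp; omega)) (Pmat'_pos m k hk ⟨0, hm⟩ j (by simp))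
      · have hlt : (i : ℕ) - N < m := by omega
        refine mul_entry_pos (pow_entry_nonneg (Pmat'_nonneg m k) N) (Pmat'_nonneg m k)
          i j ⟨(i : ℕ) - N, hlt⟩ (ih hN1 i ⟨(i : ℕ) - N, hlt⟩ (by simp; omega))
          (Pmat'_pos m k hk ⟨(i : ℕ) - N, hlt⟩ j (by simp; omega))

/-- Every entry of `R + S·R^k` on or above the first subdiagonal is positive, and
consequently, for `k ≥ 1` the matrix `P'` is primitive: `(P')^N` has all entries
strictly positive for every `N ≥ m - 1 ≥ 1`. -/
theorem Pmat'_primitive (m k : ℕ) (hk : 1 ≤ k) :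
    (∀ i j : Fin m, (i : ℕ) ≤ (j : ℕ) + 1 →
        0 < (Rmat m + Smat m * (Rmat m) ^ k) i j) ∧
      ∀ N : ℕ, 1 ≤ m - 1 → m - 1 ≤ N → ∀ i j : Fin m, 0 < ((Pmat' m k) ^ N) i j := by
  constructor
  · intro i j h
    rw [Matrix.add_apply]
    rcases Nat.lt_or_ge (i : ℕ) ((j : ℕ) + 1) with h1 | h1
    · exact add_pos_of_pos_of_nonneg (Rmat_pos i j (by omega))
        (mul_entry_nonneg (Smat_nonneg m) (pow_entry_nonneg (Rmat_nonneg m) k) i j)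
    · have hij : (i : ℕ) = (j : ℕ) + 1 := by omega
      refine add_pos_of_nonneg_of_pos (Rmat_nonneg m i j) ?_
      have hS : 0 < Smat m i j := by
        unfold Smat; rw [if_pos hij]; norm_num
      exact mul_entry_pos (Smat_nonneg m) (pow_entry_nonneg (Rmat_nonneg m) k) i j j hS
        (Rpow_pos k hk j j le_rfl)
  · intro N hm hN i j
    have hi : (i : ℕ) ≤ (j : ℕ) + N := by
      have := i.isLt; omega
    exact Ppow_pos m k hk N (by omega) i j hi
end

section
/- Let A be an m×m primitive nonnegative real matrix with Perron root (spectral radius) r, and let p and q be positive right eigenvectors of A and Aᵀ respectively for eigenvalue r. Then (A/r)^n converges entrywise to p qᵀ/(qᵀ p) as n → ∞, and in particular every entry of A^n is Θ(r^n). -/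
/-!
Rescale so that the Perron root is `1` and conjugate by `diagonal p`: the resulting matrix `P`
is row-stochastic, has a positive power, and the entrywise product `q * p` is a left fixed
vector of it. A row-stochastic matrix whose `N`-th power has all entries `≥ δ > 0` shrinks the
spread `max x - min x` of every vector by the factor `1 - card ι * δ` in `N` steps, while it
never enlarges the range `[min x, max x]`; so `P ^ n *ᵥ x` converges to a constant vector, whose
value is pinned down by the conserved quantity `(q * p) ⬝ᵥ P ^ n *ᵥ x`.
-/

open Filter Matrix
open Finset Topology

lemma tendsto_zero_of_antitone_of_le_mul {d : ℕ → ℝ} (hd : Antitone d)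
    (hd0 : ∀ n, 0 ≤ d n) {N : ℕ} {θ : ℝ} (hθ : θ < 1) (hcontr : ∀ n, d (n + N) ≤ θ * d n) :
    Tendsto d atTop (𝓝 0) := by
  have hlim : Tendsto d atTop (𝓝 (⨅ n, d n)) :=
    tendsto_atTop_ciInf hd ⟨0, Set.forall_mem_range.2 hd0⟩
  have hfix : (⨅ n, d n) ≤ θ * ⨅ n, d n :=
    le_of_tendsto_of_tendsto' (hlim.comp (tendsto_add_atTop_nat N)) (hlim.const_mul θ) hcontr
  have hnonneg : 0 ≤ ⨅ n, d n := le_ciInf hd0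
  rwa [show (⨅ n, d n) = 0 by nlinarith] at hlim

lemma exists_tendsto_of_monotone_of_antitone {a b : ℕ → ℝ} (ha : Monotone a) (hb : Antitone b)
    (hab : ∀ n, a n ≤ b n) (hgap : Tendsto (b - a) atTop (𝓝 0)) :
    ∃ L, Tendsto a atTop (𝓝 L) ∧ Tendsto b atTop (𝓝 L) := by
  have haL : Tendsto a atTop (𝓝 (⨆ n, a n)) :=
    tendsto_atTop_ciSup ha ⟨b 0, Set.forall_mem_range.2 fun n => (hab n).trans (hb n.zero_le)⟩
  refine ⟨_, haL, ?_⟩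
  simpa using haL.add hgap

lemma exists_pos_mul_pow_le_and_le_mul_pow {u : ℕ → ℝ} {r L : ℝ} (hr : 0 < r) (hL : 0 < L)
    (hu : Tendsto (fun n => (r ^ n)⁻¹ * u n) atTop (𝓝 L)) :
    ∃ c C : ℝ, 0 < c ∧ ∀ᶠ n in atTop, c * r ^ n ≤ u n ∧ u n ≤ C * r ^ n := by
  refine ⟨L / 2, 2 * L, half_pos hL, ?_⟩
  filter_upwards [hu.eventually (eventually_gt_nhds (half_lt_self hL)),
    hu.eventually (eventually_lt_nhds (by linarith : L < 2 * L))] with n hlo hhi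
  rw [inv_mul_eq_div, lt_div_iff₀ (pow_pos hr n)] at hlo
  rw [inv_mul_eq_div, div_lt_iff₀ (pow_pos hr n)] at hhi
  exact ⟨hlo.le, hhi.le⟩

section Weights

variable {ι : Type*} [Fintype ι] {w x : ι → ℝ} {c : ℝ}

lemma sum_mul_le_sum_mul_of_forall_le (hw : ∀ j, 0 ≤ w j) (hx : ∀ j, x j ≤ c) :
    ∑ j, w j * x j ≤ (∑ j, w j) * c := by
  rw [sum_mul]
  exact sum_le_sum fun j _ => mul_le_mul_of_nonneg_left (hx j) (hw j)

lemma sum_mul_le_sum_mul_of_forall_ge (hw : ∀ j, 0 ≤ w j) (hx : ∀ j, c ≤ x j) :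
    (∑ j, w j) * c ≤ ∑ j, w j * x j := by
  rw [sum_mul]
  exact sum_le_sum fun j _ => mul_le_mul_of_nonneg_left (hx j) (hw j)

end Weights

namespace Matrix

variable {ι : Type*}

section Stochastic

variable [Fintype ι] [DecidableEq ι] {P : Matrix ι ι ℝ}

lemma mulVec_apply_le_iSup (hP : P ∈ rowStochastic ℝ ι) (x : ι → ℝ) (i : ι) :
    (P *ᵥ x) i ≤ ⨆ j, x j := by
  have := sum_mul_le_sum_mul_of_forall_le (fun j => hP.1 i j) (le_ciSup (Finite.bddAbove_range x))
  rwa [sum_row_of_mem_rowStochastic hP i, one_mul] at this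

lemma iInf_le_mulVec_apply (hP : P ∈ rowStochastic ℝ ι) (x : ι → ℝ) (i : ι) :
    ⨅ j, x j ≤ (P *ᵥ x) i := by
  have := sum_mul_le_sum_mul_of_forall_ge (fun j => hP.1 i j) (ciInf_le (Finite.bddBelow_range x))
  rwa [sum_row_of_mem_rowStochastic hP i, one_mul] at this

lemma iSup_mulVec_sub_iInf_mulVec_le [Nonempty ι] (hP : P ∈ rowStochastic ℝ ι) {δ : ℝ}
    (hδ : ∀ i j, δ ≤ P i j) (x : ι → ℝ) :
    (⨆ i, (P *ᵥ x) i) - ⨅ i, (P *ᵥ x) i ≤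
      (1 - Fintype.card ι * δ) * ((⨆ i, x i) - ⨅ i, x i) := by
  obtain ⟨i, hi⟩ := exists_eq_ciSup_of_finite (f := P *ᵥ x)
  obtain ⟨k, hk⟩ := exists_eq_ciInf_of_finite (f := P *ᵥ x)
  rw [← hi, ← hk]
  -- Removing the uniform part `δ` of each row leaves nonnegative rows of equal mass
  -- `1 - card ι * δ`; the uniform part contributes the same amount to every coordinate.
  have hmass : ∀ i, ∑ j, (P i j - δ) = 1 - Fintype.card ι * δ := fun i => by
    simp [sum_sub_distrib, sum_row_of_mem_rowStochastic hP i]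
  have hsplit : ∀ i, (P *ᵥ x) i = ∑ j, (P i j - δ) * x j + δ * ∑ j, x j := fun i => by
    simp only [mulVec, dotProduct, sub_mul, sum_sub_distrib, mul_sum]
    ring
  have hup := sum_mul_le_sum_mul_of_forall_le (fun j => sub_nonneg.2 (hδ i j))
    (le_ciSup (Finite.bddAbove_range x))
  have hlo := sum_mul_le_sum_mul_of_forall_ge (fun j => sub_nonneg.2 (hδ k j))
    (ciInf_le (Finite.bddBelow_range x))
  rw [hmass] at hup hlo
  rw [hsplit i, hsplit k, mul_sub]
  linarith

theorem exists_tendsto_pow_mulVec_of_mem_rowStochastic [Nonempty ι]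
    (hP : P ∈ rowStochastic ℝ ι) {N : ℕ} (hN : ∀ i j, 0 < (P ^ N) i j) (x : ι → ℝ) :
    ∃ L, ∀ i, Tendsto (fun n => (P ^ n *ᵥ x) i) atTop (𝓝 L) := by
  obtain ⟨⟨i₀, j₀⟩, hmin⟩ := Finite.exists_min fun ij : ι × ι => (P ^ N) ij.1 ij.2
  set v : ℕ → ι → ℝ := fun n => P ^ n *ᵥ x with hv
  have hshift : ∀ k n, v (n + k) = P ^ k *ᵥ v n := fun k n => by
    simp only [hv, add_comm n k, pow_add, mulVec_mulVec]
  set a : ℕ → ℝ := fun n => ⨅ i, v n i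
  set b : ℕ → ℝ := fun n => ⨆ i, v n i
  have ha : Monotone a := monotone_nat_of_le_succ fun n => le_ciInf fun i => by
    simpa only [hshift 1, pow_one] using iInf_le_mulVec_apply hP (v n) i
  have hb : Antitone b := antitone_nat_of_succ_le fun n => ciSup_le fun i => by
    simpa only [hshift 1, pow_one] using mulVec_apply_le_iSup hP (v n) i
  have hab : ∀ n, a n ≤ b n := fun n =>
    (ciInf_le (Finite.bddBelow_range _) i₀).trans (le_ciSup (Finite.bddAbove_range _) i₀)
  have hθ : 1 - Fintype.card ι * (P ^ N) i₀ j₀ < 1 := by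
    have := mul_pos (Nat.cast_pos.2 (Fintype.card_pos (α := ι))) (hN i₀ j₀)
    linarith
  have hgap : Tendsto (b - a) atTop (𝓝 0) := by
    refine tendsto_zero_of_antitone_of_le_mul (fun m n h => sub_le_sub (hb h) (ha h))
      (fun n => sub_nonneg.2 (hab n)) (N := N) hθ fun n => ?_
    simpa only [Pi.sub_apply, a, b, hshift N] using
      iSup_mulVec_sub_iInf_mulVec_le (pow_mem hP N) (fun i j => hmin (i, j)) (v n)
  obtain ⟨L, haL, hbL⟩ := exists_tendsto_of_monotone_of_antitone ha hb hab hgap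
  exact ⟨L, fun i => tendsto_of_tendsto_of_tendsto_of_le_of_le haL hbL
    (fun n => ciInf_le (Finite.bddBelow_range _) i) fun n => le_ciSup (Finite.bddAbove_range _) i⟩

lemma vecMul_pow_eq_self {w : ι → ℝ} (hw : w ᵥ* P = w) (n : ℕ) : w ᵥ* P ^ n = w := by
  induction n with
  | zero => simp
  | succ n ih => rw [pow_succ, ← vecMul_vecMul, ih, hw]

theorem tendsto_pow_apply_of_mem_rowStochastic (hP : P ∈ rowStochastic ℝ ι) {N : ℕ}
    (hN : ∀ i j, 0 < (P ^ N) i j) {w : ι → ℝ} (hw : w ᵥ* P = w) (hw0 : ∑ k, w k ≠ 0)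
    (i j : ι) : Tendsto (fun n => (P ^ n) i j) atTop (𝓝 (w j / ∑ k, w k)) := by
  have : Nonempty ι := ⟨i⟩
  obtain ⟨L, hL⟩ := exists_tendsto_pow_mulVec_of_mem_rowStochastic hP hN (Pi.single j 1)
  have hconserved : ∀ n, w ⬝ᵥ (P ^ n *ᵥ Pi.single j 1) = w j := fun n => by
    rw [dotProduct_mulVec, vecMul_pow_eq_self hw, dotProduct_single_one]
  have hweighted : Tendsto (fun n => w ⬝ᵥ (P ^ n *ᵥ Pi.single j 1)) atTop
      (𝓝 ((∑ k, w k) * L)) := by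
    simpa only [dotProduct, sum_mul] using
      tendsto_finsetSum _ fun k _ => (hL k).const_mul (w k)
  have hL_eq : L = w j / ∑ k, w k := by
    rw [eq_div_iff hw0, mul_comm]
    exact tendsto_nhds_unique hweighted (by simp only [hconserved, tendsto_const_nhds])
  simpa [hL_eq, mulVec_single] using hL i

end Stochastic

section DoobTransform

variable {B : Matrix ι ι ℝ} {p q : ι → ℝ}

/-- `diagonal p⁻¹ * B * diagonal p`, which turns a fixed vector `p` of `B` into the all-ones
vector. -/
noncomputable def doobTransform (B : Matrix ι ι ℝ) (p : ι → ℝ) : Matrix ι ι ℝ :=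
  of fun i j => (p i)⁻¹ * B i j * p j

lemma doobTransform_apply (i j : ι) : doobTransform B p i j = (p i)⁻¹ * B i j * p j := rfl

variable [Fintype ι]

lemma vecMul_doobTransform (hp : ∀ i, p i ≠ 0) (hq : q ᵥ* B = q) :
    (q * p) ᵥ* doobTransform B p = q * p := by
  ext j
  have hcol := congrFun hq j
  simp only [vecMul, dotProduct] at hcol
  simp only [vecMul, dotProduct, doobTransform_apply, Pi.mul_apply]
  calc ∑ i, q i * p i * ((p i)⁻¹ * B i j * p j) = (∑ i, q i * B i j) * p j := by
        rw [sum_mul]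
        refine sum_congr rfl fun i _ => ?_
        field_simp [hp i]
    _ = q j * p j := by rw [hcol]

variable [DecidableEq ι]

lemma doobTransform_pow (hp : ∀ i, p i ≠ 0) (n : ℕ) :
    doobTransform B p ^ n = doobTransform (B ^ n) p := by
  have hconj : SemiconjBy (diagonal p⁻¹) B (doobTransform B p) := by
    ext i j
    simp [doobTransform_apply, diagonal_mul, mul_diagonal, hp j]
  have := (hconj.pow_right n).eq
  ext i j
  have hij := congrFun (congrFun this i) j
  simp only [diagonal_mul, mul_diagonal, Pi.inv_apply] at hij
  rw [doobTransform_apply, hij, mul_assoc, inv_mul_cancel₀ (hp j), mul_one]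

lemma doobTransform_mem_rowStochastic (hB : ∀ i j, 0 ≤ B i j) (hp : ∀ i, 0 < p i)
    (hBp : B *ᵥ p = p) : doobTransform B p ∈ rowStochastic ℝ ι := by
  refine mem_rowStochastic_iff_sum.2 ⟨fun i j => ?_, fun i => ?_⟩
  · have := hp i; have := hp j; have := hB i j
    simp only [doobTransform_apply]
    positivity
  · have hrow := congrFun hBp i
    simp only [mulVec, dotProduct] at hrow
    simp only [doobTransform_apply, mul_assoc, ← mul_sum, hrow, inv_mul_cancel₀ (hp i).ne']

theorem tendsto_pow_apply_of_mulVec_eq_self (hB : ∀ i j, 0 ≤ B i j) {N : ℕ}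
    (hprim : ∀ i j, 0 < (B ^ N) i j) (hp : ∀ i, 0 < p i) (hq : ∀ i, 0 < q i)
    (hBp : B *ᵥ p = p) (hBq : q ᵥ* B = q) (i j : ι) :
    Tendsto (fun n => (B ^ n) i j) atTop (𝓝 (p i * q j / ∑ k, q k * p k)) := by
  have hp0 : ∀ i, p i ≠ 0 := fun i => (hp i).ne'
  have hPN : ∀ i j, 0 < (doobTransform B p ^ N) i j := fun i j => by
    have := hp i; have := hp j; have := hprim i j
    rw [doobTransform_pow hp0, doobTransform_apply]
    positivity
  have hw0 : ∑ k, (q * p) k ≠ 0 :=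
    (sum_pos (fun k _ => mul_pos (hq k) (hp k)) ⟨i, mem_univ i⟩).ne'
  have hlim := ((tendsto_pow_apply_of_mem_rowStochastic
    (doobTransform_mem_rowStochastic hB hp hBp) hPN (vecMul_doobTransform hp0 hBq) hw0
    i j).const_mul (p i)).mul_const (p j)⁻¹
  convert hlim using 1
  · ext n
    rw [doobTransform_pow hp0, doobTransform_apply]
    field_simp [hp0 i, hp0 j]
  · simp only [Pi.mul_apply]
    field_simp [hp0 j]

end DoobTransform

end Matrix

theorem perron_frobenius_limit_general (m : ℕ) (A : Matrix (Fin m) (Fin m) ℝ)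
    (hnn : ∀ i j, 0 ≤ A i j) (hprim : ∃ N : ℕ, ∀ i j, 0 < (A ^ N) i j)
    (r : ℝ) (hr : 0 < r)
    (p q : Fin m → ℝ) (hp : ∀ i, 0 < p i) (hq : ∀ i, 0 < q i)
    (hAp : A.mulVec p = r • p) (hAq : Aᵀ.mulVec q = r • q) :
    (∀ i j, Tendsto (fun n : ℕ => ((r⁻¹ • A) ^ n) i j) atTop
        (nhds (p i * q j / ∑ x, q x * p x))) ∧
      ∀ i j, ∃ c C : ℝ, 0 < c ∧
        ∀ᶠ n : ℕ in atTop, c * r ^ n ≤ (A ^ n) i j ∧ (A ^ n) i j ≤ C * r ^ n := by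
  obtain ⟨N, hN⟩ := hprim
  have hcancel : ∀ v : Fin m → ℝ, r⁻¹ • r • v = v := fun v => by
    rw [smul_smul, inv_mul_cancel₀ hr.ne', one_smul]
  have hBnn : ∀ i j, 0 ≤ (r⁻¹ • A) i j := fun i j => by
    simpa using mul_nonneg (inv_nonneg.2 hr.le) (hnn i j)
  have hBN : ∀ i j, 0 < ((r⁻¹ • A) ^ N) i j := fun i j => by
    simpa [smul_pow] using mul_pos (pow_pos (inv_pos.2 hr) N) (hN i j)
  have hBp : (r⁻¹ • A) *ᵥ p = p := by rw [smul_mulVec, hAp, hcancel]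
  have hBq : q ᵥ* (r⁻¹ • A) = q := by
    rw [← mulVec_transpose, transpose_smul, smul_mulVec, hAq, hcancel]
  have hlim := tendsto_pow_apply_of_mulVec_eq_self hBnn hBN hp hq hBp hBq
  have hpos : ∀ i j, 0 < p i * q j / ∑ x, q x * p x := fun i j =>
    div_pos (mul_pos (hp i) (hq j)) (sum_pos (fun k _ => mul_pos (hq k) (hp k)) ⟨i, mem_univ i⟩)
  refine ⟨hlim, fun i j => exists_pos_mul_pow_le_and_le_mul_pow hr (hpos i j) ?_⟩
  simpa [smul_pow, inv_pow] using hlim i j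

/-- Perron–Frobenius limit: for a primitive nonnegative matrix `A` with Perron root
`r` (the spectral radius) and positive eigenvectors `p` of `A` and `q` of `Aᵀ` for
eigenvalue `r`, the powers `(A/r)^n` converge entrywise to `p qᵀ/(qᵀ p)`; in
particular every entry of `A^n` is `Θ(r^n)`. -/
theorem perron_frobenius_limit (m : ℕ) (A : Matrix (Fin m) (Fin m) ℝ)
    (hnn : ∀ i j, 0 ≤ A i j) (hprim : ∃ N : ℕ, ∀ i j, 0 < (A ^ N) i j)
    (r : ℝ) (hr : 0 < r)
    (hspec : ∀ μ ∈ spectrum ℂ (A.map (Complex.ofReal ·)), ‖μ‖ ≤ r)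
    (p q : Fin m → ℝ) (hp : ∀ i, 0 < p i) (hq : ∀ i, 0 < q i)
    (hAp : A.mulVec p = r • p) (hAq : Aᵀ.mulVec q = r • q) :
    (∀ i j, Tendsto (fun n : ℕ => ((r⁻¹ • A) ^ n) i j) atTop
        (nhds (p i * q j / ∑ x, q x * p x))) ∧
      ∀ i j, ∃ c C : ℝ, 0 < c ∧
        ∀ᶠ n : ℕ in atTop, c * r ^ n ≤ (A ^ n) i j ∧ (A ^ n) i j ≤ C * r ^ n :=
  perron_frobenius_limit_general m A hnn hprim r hr p q hp hq hAp hAq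
end

section
/- Let P be an almost convex polygon whose boundary consists of a sequence of pockets (concave chains between convex vertices), containing two adjacent pockets A = (p₁,…,p_k) and B = (p_k,…,p_l) sharing the convex vertex p_k. Let P' be the almost convex polygon obtained from P by swapping the pockets A and B. Then the number of crossing-free geometric graphs drawable inside P (using only diagonals, not boundary edges) equals the corresponding number for P'. -/
open Finset

/-- An almost convex polygon is described combinatorially by the list `L` of the
numbers of reflex (inner) vertices of its consecutive pockets.  `pocketStart L p`
is the index of the first (convex) vertex of the `p`-th pocket. -/
def pocketStart (L : List ℕ) (p : ℕ) : ℕ := ((L.take p).map (· + 1)).sum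

/-- The number of vertices of the almost convex polygon with pocket sizes `L`. -/
def numVerts (L : List ℕ) : ℕ := pocketStart L L.length + 1

/-- Vertices `a ≤ b` lie on a common pocket (including its two convex endpoints). -/
def SamePocket (L : List ℕ) (a b : ℕ) : Prop :=
  ∃ p ∈ Finset.range L.length,
    pocketStart L p ≤ a ∧ b ≤ pocketStart L p + L.getD p 0 + 1

instance (L : List ℕ) (a b : ℕ) : Decidable (SamePocket L a b) := by
  unfold SamePocket; infer_instance

/-- An edge `(a, b)` is admissible inside the almost convex polygon: it is a
non-boundary chord (`a + 2 ≤ b < numVerts L`) whose endpoints do not lie on a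
common pocket (edges within a pocket leave the polygon). -/
def AdmissibleEdge (L : List ℕ) (e : ℕ × ℕ) : Prop :=
  e.1 + 2 ≤ e.2 ∧ e.2 < numVerts L ∧ ¬ SamePocket L e.1 e.2

instance (L : List ℕ) (e : ℕ × ℕ) : Decidable (AdmissibleEdge L e) := by
  unfold AdmissibleEdge; infer_instance

/-- Two chords with increasing endpoints cross iff their endpoints interleave. -/
def ChordsCross (e f : ℕ × ℕ) : Prop :=
  (e.1 < f.1 ∧ f.1 < e.2 ∧ e.2 < f.2) ∨ (f.1 < e.1 ∧ e.1 < f.2 ∧ f.2 < e.2)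

instance (e f : ℕ × ℕ) : Decidable (ChordsCross e f) := by
  unfold ChordsCross; infer_instance

/-- The number of crossing-free geometric graphs drawable inside the almost convex
polygon with pocket sizes `L`, using only interior chords (no boundary edges). -/
def pocketGraphCount (L : List ℕ) : ℕ :=
  (((range (numVerts L) ×ˢ range (numVerts L)).powerset).filter
    (fun E => (∀ e ∈ E, AdmissibleEdge L e) ∧
      ∀ e ∈ E, ∀ f ∈ E, ¬ ChordsCross e f)).card

/-!
Let `s` and `t` be the convex vertices bounding the two swapped pockets. A non-boundary chord is
admissible iff some convex vertex lies strictly between its endpoints, and swapping the pockets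
reflects the convex vertices inside the window `[s, t]` by `v ↦ s + t - v` and fixes the others.
A plane graph is transported to the swapped polygon by reflecting its chords inside the window and
moving the inner endpoints of the chords that leave the window, in order, onto the reflection of
that set of endpoints. No chord inside the window covers one of these endpoints, so crossings are
preserved; the map is an involution, hence injective, and the swap symmetry gives equality.
-/

section OrderTransfer

variable {α : Type*} [LinearOrder α] {M N : Finset α} {v : α}

noncomputable def orderTransfer (M N : Finset α) (v : α) : α :=
  if h : M.card = N.card ∧ v ∈ M then
    ((M.orderIsoOfFin h.1).symm.trans (N.orderIsoOfFin rfl) ⟨v, h.2⟩ : α)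
  else v

theorem orderTransfer_of_notMem (hv : v ∉ M) : orderTransfer M N v = v := by
  simp [orderTransfer, hv]

theorem orderTransfer_apply (hc : M.card = N.card) (hv : v ∈ M) :
    orderTransfer M N v = ((M.orderIsoOfFin hc).symm.trans (N.orderIsoOfFin rfl) ⟨v, hv⟩ : α) := by
  simp [orderTransfer, hc, hv]

theorem orderTransfer_mem (hc : M.card = N.card) (hv : v ∈ M) : orderTransfer M N v ∈ N := by
  rw [orderTransfer_apply hc hv]
  exact Subtype.prop _

theorem strictMonoOn_orderTransfer (hc : M.card = N.card) :
    StrictMonoOn (orderTransfer M N) M := by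
  intro u hu v hv huv
  rw [orderTransfer_apply hc hu, orderTransfer_apply hc hv, Subtype.coe_lt_coe, OrderIso.lt_iff_lt]
  exact huv

theorem orderTransfer_orderTransfer (hc : M.card = N.card) (hv : v ∈ M) :
    orderTransfer N M (orderTransfer M N v) = v := by
  rw [orderTransfer_apply hc hv, orderTransfer_apply hc.symm (Subtype.prop _)]
  have hrefl := Subsingleton.elim (((M.orderIsoOfFin hc).symm.trans (N.orderIsoOfFin rfl)).trans
    ((N.orderIsoOfFin hc.symm).symm.trans (M.orderIsoOfFin rfl))) (OrderIso.refl M)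
  simp only [Subtype.coe_eta, ← OrderIso.trans_apply, hrefl, OrderIso.refl_apply]

theorem image_orderTransfer (hc : M.card = N.card) : M.image (orderTransfer M N) = N := by
  refine eq_of_subset_of_card_le (image_subset_iff.2 fun v hv ↦ orderTransfer_mem hc hv) ?_
  rw [← hc, card_image_of_injOn (strictMonoOn_orderTransfer hc).injOn]

end OrderTransfer

theorem chordsCross_comm {e f : ℕ × ℕ} : ChordsCross e f ↔ ChordsCross f e := by
  unfold ChordsCross; tauto

theorem StrictMonoOn.chordsCross_iff {g : ℕ → ℕ} {S : Set ℕ} (hg : StrictMonoOn g S)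
    {a b c d : ℕ} (ha : a ∈ S) (hb : b ∈ S) (hc : c ∈ S) (hd : d ∈ S) :
    ChordsCross (g a, g b) (g c, g d) ↔ ChordsCross (a, b) (c, d) := by
  simp only [ChordsCross, hg.lt_iff_lt ha hc, hg.lt_iff_lt hc hb, hg.lt_iff_lt hb hd,
    hg.lt_iff_lt hc ha, hg.lt_iff_lt ha hd, hg.lt_iff_lt hd hb]

theorem chordsCross_reflect_iff {k a b c d : ℕ} (hb : b ≤ k) (hd : d ≤ k) (hab : a ≤ b)
    (hcd : c ≤ d) : ChordsCross (k - b, k - a) (k - d, k - c) ↔ ChordsCross (a, b) (c, d) := by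
  simp only [ChordsCross]; omega

def IsChord (n : ℕ) (C : Finset ℕ) (e : ℕ × ℕ) : Prop :=
  e.1 + 2 ≤ e.2 ∧ e.2 < n ∧ ∃ c ∈ C, e.1 < c ∧ c < e.2

instance (n : ℕ) (C : Finset ℕ) : DecidablePred (IsChord n C) := fun _ ↦ by
  unfold IsChord; infer_instance

def chordGraphs (n : ℕ) (C : Finset ℕ) : Finset (Finset (ℕ × ℕ)) :=
  ((range n ×ˢ range n).powerset).filter
    (fun E ↦ (∀ e ∈ E, IsChord n C e) ∧ ∀ e ∈ E, ∀ f ∈ E, ¬ ChordsCross e f)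

theorem mem_chordGraphs {n : ℕ} {C : Finset ℕ} {E : Finset (ℕ × ℕ)} :
    E ∈ chordGraphs n C ↔ (∀ e ∈ E, IsChord n C e) ∧ ∀ e ∈ E, ∀ f ∈ E, ¬ ChordsCross e f := by
  refine ⟨fun h ↦ (mem_filter.1 h).2, fun h ↦ mem_filter.2 ⟨mem_powerset.2 fun e he ↦ ?_, h⟩⟩
  have := h.1 e he
  simp only [mem_product, mem_range]
  exact ⟨by unfold IsChord at this; omega, this.2.1⟩

section Mirror

def InWindow (s t : ℕ) (e : ℕ × ℕ) : Prop := s ≤ e.1 ∧ e.2 ≤ t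

instance (s t : ℕ) : DecidablePred (InWindow s t) := fun _ ↦ by
  unfold InWindow; infer_instance

def straddlePoints (s t : ℕ) (G : Finset (ℕ × ℕ)) : Finset ℕ :=
  ((G.filter (¬ InWindow s t ·)).image Prod.fst ∪
    (G.filter (¬ InWindow s t ·)).image Prod.snd).filter (fun v ↦ s < v ∧ v < t)

noncomputable def relabel (s t : ℕ) (G : Finset (ℕ × ℕ)) : ℕ → ℕ :=
  orderTransfer (straddlePoints s t G) ((straddlePoints s t G).image (s + t - ·))

noncomputable def mirrorEdge (s t : ℕ) (G : Finset (ℕ × ℕ)) (e : ℕ × ℕ) : ℕ × ℕ :=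
  if InWindow s t e then (s + t - e.2, s + t - e.1) else (relabel s t G e.1, relabel s t G e.2)

noncomputable def mirrorGraph (s t : ℕ) (G : Finset (ℕ × ℕ)) : Finset (ℕ × ℕ) :=
  G.image (mirrorEdge s t G)

variable {n s t v : ℕ} {C C' : Finset ℕ} {G : Finset (ℕ × ℕ)} {e f : ℕ × ℕ}

theorem mem_straddlePoints : v ∈ straddlePoints s t G ↔
    (s < v ∧ v < t) ∧ ∃ e ∈ G, ¬ InWindow s t e ∧ (e.1 = v ∨ e.2 = v) := by
  simp only [straddlePoints, mem_filter, mem_union, mem_image]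
  aesop

theorem card_image_reflect_straddlePoints :
    (straddlePoints s t G).card = ((straddlePoints s t G).image (s + t - ·)).card := by
  refine (card_image_of_injOn fun u hu w hw huw ↦ ?_).symm
  have := (mem_straddlePoints.1 hu).1
  have := (mem_straddlePoints.1 hw).1
  have : s + t - u = s + t - w := huw
  omega

theorem image_reflect_image_reflect_straddlePoints :
    ((straddlePoints s t G).image (s + t - ·)).image (s + t - ·) = straddlePoints s t G := by
  rw [image_image]
  refine (image_congr fun u hu ↦ ?_).trans image_id
  have := (mem_straddlePoints.1 hu).1
  show s + t - (s + t - u) = u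
  omega

theorem relabel_mem_image_reflect (hv : v ∈ straddlePoints s t G) :
    relabel s t G v ∈ (straddlePoints s t G).image (s + t - ·) :=
  orderTransfer_mem card_image_reflect_straddlePoints hv

theorem relabel_eq_self_or_mem_window (hv : v ≤ s ∨ t ≤ v ∨ v ∈ straddlePoints s t G) :
    ((v ≤ s ∨ t ≤ v) ∧ relabel s t G v = v) ∨
      (v ∈ straddlePoints s t G ∧ s < v ∧ v < t ∧ s < relabel s t G v ∧ relabel s t G v < t) := by
  by_cases hmem : v ∈ straddlePoints s t G
  · obtain ⟨u, hu, hvu⟩ := mem_image.1 (relabel_mem_image_reflect hmem)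
    have := (mem_straddlePoints.1 hu).1
    have := (mem_straddlePoints.1 hmem).1
    rw [← hvu]
    exact Or.inr ⟨hmem, by omega⟩
  · left
    exact ⟨by tauto, orderTransfer_of_notMem hmem⟩

theorem endpoint_le_or_le_or_mem_straddlePoints (he : e ∈ G) (hout : ¬ InWindow s t e)
    (hv : e.1 = v ∨ e.2 = v) : v ≤ s ∨ t ≤ v ∨ v ∈ straddlePoints s t G := by
  by_cases hw : s < v ∧ v < t
  · exact Or.inr (Or.inr (mem_straddlePoints.2 ⟨hw, e, he, hout, hv⟩))
  · omega

theorem strictMonoOn_relabel :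
    StrictMonoOn (relabel s t G) {v | v ≤ s ∨ t ≤ v ∨ v ∈ straddlePoints s t G} := by
  intro u hu w hw huw
  rcases relabel_eq_self_or_mem_window hu with ⟨hu', hgu⟩ | ⟨hu', _⟩ <;>
    rcases relabel_eq_self_or_mem_window hw with ⟨hw', hgw⟩ | ⟨hw', _⟩
  · omega
  · omega
  · omega
  · exact strictMonoOn_orderTransfer card_image_reflect_straddlePoints hu' hw' huw

theorem mirrorEdge_of_inWindow (h : InWindow s t e) :
    mirrorEdge s t G e = (s + t - e.2, s + t - e.1) := if_pos h

theorem mirrorEdge_of_not_inWindow (h : ¬ InWindow s t e) :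
    mirrorEdge s t G e = (relabel s t G e.1, relabel s t G e.2) := if_neg h

theorem inWindow_mirrorEdge_iff : InWindow s t (mirrorEdge s t G e) ↔ InWindow s t e := by
  by_cases h : InWindow s t e
  · rw [mirrorEdge_of_inWindow h]
    unfold InWindow at h ⊢
    omega
  · have hfst : e.1 < s → relabel s t G e.1 = e.1 := fun h1 ↦
      orderTransfer_of_notMem fun hm ↦ by have := (mem_straddlePoints.1 hm).1; omega
    have hsnd : t < e.2 → relabel s t G e.2 = e.2 := fun h2 ↦
      orderTransfer_of_notMem fun hm ↦ by have := (mem_straddlePoints.1 hm).1; omega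
    rw [mirrorEdge_of_not_inWindow h]
    unfold InWindow at h ⊢
    omega

theorem straddlePoints_mirrorGraph :
    straddlePoints s t (mirrorGraph s t G) = (straddlePoints s t G).image (s + t - ·) := by
  rw [← image_orderTransfer card_image_reflect_straddlePoints, ← relabel]
  ext v
  simp only [mem_image, mem_straddlePoints, mirrorGraph, exists_exists_and_eq_and,
    inWindow_mirrorEdge_iff]
  constructor
  · rintro ⟨hv, e, he, hout, hend⟩
    rw [mirrorEdge_of_not_inWindow hout] at hend
    obtain ⟨w, hw, rfl⟩ : ∃ w, (e.1 = w ∨ e.2 = w) ∧ relabel s t G w = v := by aesop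
    rcases relabel_eq_self_or_mem_window (endpoint_le_or_le_or_mem_straddlePoints he hout hw)
      with ⟨_, hgw⟩ | ⟨hmem, _⟩
    · omega
    · exact ⟨w, (mem_straddlePoints.1 hmem), rfl⟩
  · rintro ⟨w, ⟨hw, e, he, hout, hend⟩, rfl⟩
    have hmem : w ∈ straddlePoints s t G := mem_straddlePoints.2 ⟨hw, e, he, hout, hend⟩
    obtain ⟨-, -, -, hgw⟩ := (relabel_eq_self_or_mem_window (Or.inr (Or.inr hmem))).resolve_left
      (by omega)
    refine ⟨hgw, e, he, hout, ?_⟩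
    rw [mirrorEdge_of_not_inWindow hout]
    rcases hend with rfl | rfl <;> simp

theorem relabel_mirrorGraph_relabel (hv : v ≤ s ∨ t ≤ v ∨ v ∈ straddlePoints s t G) :
    relabel s t (mirrorGraph s t G) (relabel s t G v) = v := by
  rw [relabel, straddlePoints_mirrorGraph, image_reflect_image_reflect_straddlePoints]
  rcases relabel_eq_self_or_mem_window hv with ⟨hv, hgv⟩ | ⟨hmem, -⟩
  · rw [hgv, orderTransfer_of_notMem]
    intro hm
    obtain ⟨u, hu, rfl⟩ := mem_image.1 hm
    have := (mem_straddlePoints.1 hu).1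
    omega
  · exact orderTransfer_orderTransfer card_image_reflect_straddlePoints hmem

theorem mirrorEdge_mirrorEdge (he : e ∈ G) (hle : e.1 ≤ e.2) :
    mirrorEdge s t (mirrorGraph s t G) (mirrorEdge s t G e) = e := by
  by_cases h : InWindow s t e
  · have h' : InWindow s t (s + t - e.2, s + t - e.1) := by unfold InWindow at h ⊢; omega
    rw [mirrorEdge_of_inWindow h, mirrorEdge_of_inWindow h']
    unfold InWindow at h
    ext <;> simp only <;> omega
  · rw [mirrorEdge_of_not_inWindow (G := mirrorGraph s t G) (inWindow_mirrorEdge_iff.not.2 h),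
      mirrorEdge_of_not_inWindow h,
      relabel_mirrorGraph_relabel (endpoint_le_or_le_or_mem_straddlePoints he h (Or.inl rfl)),
      relabel_mirrorGraph_relabel (endpoint_le_or_le_or_mem_straddlePoints he h (Or.inr rfl))]

theorem mirrorGraph_mirrorGraph (hG : ∀ e ∈ G, e.1 ≤ e.2) :
    mirrorGraph s t (mirrorGraph s t G) = G := by
  rw [mirrorGraph, mirrorGraph, image_image]
  exact (image_congr fun e he ↦ mirrorEdge_mirrorEdge he (hG e he)).trans image_id

theorem chordsCross_iff_covers_endpoint (he : InWindow s t e) (hf : ¬ InWindow s t f) :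
    ChordsCross e f ↔ ∃ v, (f.1 = v ∨ f.2 = v) ∧ (s < v ∧ v < t) ∧ e.1 < v ∧ v < e.2 := by
  unfold InWindow at he hf
  unfold ChordsCross
  constructor
  · rintro (h | h)
    · exact ⟨f.1, Or.inl rfl, by omega⟩
    · exact ⟨f.2, Or.inr rfl, by omega⟩
  · rintro ⟨v, rfl | rfl, hv⟩ <;> omega

theorem not_covers_of_mem_straddlePoints (hG : ∀ e ∈ G, ∀ f ∈ G, ¬ ChordsCross e f)
    (he : e ∈ G) (hin : InWindow s t e) (hv : v ∈ straddlePoints s t G) :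
    ¬ (e.1 < v ∧ v < e.2) := fun hcov ↦ by
  obtain ⟨hvw, f, hf, hout, hend⟩ := mem_straddlePoints.1 hv
  exact hG e he f hf ((chordsCross_iff_covers_endpoint hin hout).2 ⟨v, hend, hvw, hcov⟩)

theorem not_chordsCross_mirrorEdge_of_inWindow (hG : ∀ e ∈ G, ∀ f ∈ G, ¬ ChordsCross e f)
    (he : e ∈ G) (hf : f ∈ G) (hin : InWindow s t e) (hout : ¬ InWindow s t f) :
    ¬ ChordsCross (mirrorEdge s t G e) (mirrorEdge s t G f) := by
  rw [chordsCross_iff_covers_endpoint (inWindow_mirrorEdge_iff.2 hin)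
    (inWindow_mirrorEdge_iff.not.2 hout), mirrorEdge_of_inWindow hin,
    mirrorEdge_of_not_inWindow hout]
  rintro ⟨v, hend, hvw, hcov⟩
  obtain ⟨w, hw, rfl⟩ : ∃ w, (f.1 = w ∨ f.2 = w) ∧ relabel s t G w = v := by
    rcases hend with h | h
    exacts [⟨f.1, Or.inl rfl, h⟩, ⟨f.2, Or.inr rfl, h⟩]
  rcases relabel_eq_self_or_mem_window (endpoint_le_or_le_or_mem_straddlePoints hf hout hw)
    with ⟨_, hgw⟩ | ⟨hmem, -⟩
  · omega
  · obtain ⟨u, hu, hgu⟩ := mem_image.1 (relabel_mem_image_reflect hmem)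
    have := (mem_straddlePoints.1 hu).1
    unfold InWindow at hin
    exact not_covers_of_mem_straddlePoints hG he hin hu (by simp only at hcov; omega)

theorem not_chordsCross_mirrorGraph (hG : ∀ e ∈ G, ∀ f ∈ G, ¬ ChordsCross e f)
    (hle : ∀ e ∈ G, e.1 ≤ e.2) :
    ∀ e ∈ mirrorGraph s t G, ∀ f ∈ mirrorGraph s t G, ¬ ChordsCross e f := by
  simp only [mirrorGraph, forall_mem_image]
  intro e he f hf
  by_cases hin_e : InWindow s t e <;> by_cases hin_f : InWindow s t f
  · rw [mirrorEdge_of_inWindow hin_e, mirrorEdge_of_inWindow hin_f]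
    unfold InWindow at hin_e hin_f
    exact (chordsCross_reflect_iff (by omega) (by omega) (hle e he) (hle f hf)).not.2 (hG e he f hf)
  · exact not_chordsCross_mirrorEdge_of_inWindow hG he hf hin_e hin_f
  · rw [chordsCross_comm]
    exact not_chordsCross_mirrorEdge_of_inWindow hG hf he hin_f hin_e
  · rw [mirrorEdge_of_not_inWindow hin_e, mirrorEdge_of_not_inWindow hin_f,
      strictMonoOn_relabel.chordsCross_iff
        (endpoint_le_or_le_or_mem_straddlePoints he hin_e (Or.inl rfl))
        (endpoint_le_or_le_or_mem_straddlePoints he hin_e (Or.inr rfl))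
        (endpoint_le_or_le_or_mem_straddlePoints hf hin_f (Or.inl rfl))
        (endpoint_le_or_le_or_mem_straddlePoints hf hin_f (Or.inr rfl))]
    exact hG e he f hf

theorem isChord_mirrorEdge (htn : t < n) (hs : s ∈ C') (ht : t ∈ C')
    (hout : ∀ c ∈ C, c < s ∨ t < c → c ∈ C') (hin : ∀ c ∈ C, s ≤ c → c ≤ t → s + t - c ∈ C')
    (he : e ∈ G) (hchord : IsChord n C e) : IsChord n C' (mirrorEdge s t G e) := by
  obtain ⟨hlen, hn, c, hc, hac, hcb⟩ := hchord
  by_cases h : InWindow s t e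
  · rw [mirrorEdge_of_inWindow h]
    unfold InWindow at h
    exact ⟨by omega, by omega, s + t - c, hin c hc (by omega) (by omega), by omega, by omega⟩
  · have hsep : ∀ a b, (a < s ∧ s < b) ∨ (a < t ∧ t < b) ∨ (a = e.1 ∧ b = e.2 ∧ (c < s ∨ t < c)) →
        ∃ c ∈ C', a < c ∧ c < b := by
      rintro a b (hab | hab | ⟨rfl, rfl, hcw⟩)
      exacts [⟨s, hs, hab⟩, ⟨t, ht, hab⟩, ⟨c, hout c hc hcw, hac, hcb⟩]
    rw [mirrorEdge_of_not_inWindow h]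
    unfold InWindow at h
    rcases relabel_eq_self_or_mem_window (endpoint_le_or_le_or_mem_straddlePoints he h
      (Or.inl rfl)) with ⟨_, h₁⟩ | ⟨-, h₁⟩ <;>
    rcases relabel_eq_self_or_mem_window (endpoint_le_or_le_or_mem_straddlePoints he h
      (Or.inr rfl)) with ⟨_, h₂⟩ | ⟨-, h₂⟩ <;>
    exact ⟨by omega, by omega, hsep _ _ (by omega)⟩

theorem fst_le_snd_of_mem_chordGraphs (hG : G ∈ chordGraphs n C) (he : e ∈ G) : e.1 ≤ e.2 := by
  have := ((mem_chordGraphs.1 hG).1 e he).1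
  omega

theorem mirrorGraph_mem_chordGraphs (htn : t < n) (hs : s ∈ C') (ht : t ∈ C')
    (hout : ∀ c ∈ C, c < s ∨ t < c → c ∈ C') (hin : ∀ c ∈ C, s ≤ c → c ≤ t → s + t - c ∈ C')
    (hG : G ∈ chordGraphs n C) : mirrorGraph s t G ∈ chordGraphs n C' := by
  obtain ⟨hchord, hcross⟩ := mem_chordGraphs.1 hG
  exact mem_chordGraphs.2 ⟨forall_mem_image.2 fun e he ↦
    isChord_mirrorEdge htn hs ht hout hin he (hchord e he),
    not_chordsCross_mirrorGraph hcross fun e he ↦ fst_le_snd_of_mem_chordGraphs hG he⟩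

theorem card_chordGraphs_le (htn : t < n) (hs : s ∈ C') (ht : t ∈ C')
    (hout : ∀ c ∈ C, c < s ∨ t < c → c ∈ C') (hin : ∀ c ∈ C, s ≤ c → c ≤ t → s + t - c ∈ C') :
    (chordGraphs n C).card ≤ (chordGraphs n C').card := by
  refine card_le_card_of_injOn (mirrorGraph s t)
    (fun G hG ↦ mirrorGraph_mem_chordGraphs htn hs ht hout hin hG) fun G₁ h₁ G₂ h₂ heq ↦ ?_
  rw [← mirrorGraph_mirrorGraph (s := s) (t := t) fun e ↦ fst_le_snd_of_mem_chordGraphs h₁, heq,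
    mirrorGraph_mirrorGraph fun e ↦ fst_le_snd_of_mem_chordGraphs h₂]

end Mirror

section Pockets

variable {x y : ℕ} {A B L : List ℕ} {a b v : ℕ}

/-- The positions `pocketStart L p`, `p ≤ L.length`, of the convex vertices. -/
def convexVerts : List ℕ → Finset ℕ
  | [] => {0}
  | x :: L => insert 0 ((convexVerts L).image (x + 1 + ·))

theorem pocketStart_zero : pocketStart L 0 = 0 := by
  simp [pocketStart]

theorem pocketStart_cons_succ (p : ℕ) : pocketStart (x :: L) (p + 1) = x + 1 + pocketStart L p := by
  simp [pocketStart, List.take_succ_cons]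

theorem numVerts_cons : numVerts (x :: L) = x + 1 + numVerts L := by
  simp only [numVerts, List.length_cons, pocketStart_cons_succ]
  omega

theorem numVerts_append : numVerts (A ++ L) = pocketStart A A.length + numVerts L := by
  induction A with
  | nil => simp [pocketStart_zero]
  | cons x A ih =>
    rw [List.cons_append, numVerts_cons, ih, List.length_cons, pocketStart_cons_succ]
    omega

theorem samePocket_cons_iff : SamePocket (x :: L) a b ↔
    b ≤ x + 1 ∨ x + 1 ≤ a ∧ SamePocket L (a - (x + 1)) (b - (x + 1)) := by
  simp only [SamePocket, mem_range, List.length_cons]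
  constructor
  · rintro ⟨_ | q, hq, h₁, h₂⟩
    · simp only [pocketStart_zero, List.getD_cons_zero] at h₂
      exact Or.inl (by omega)
    · simp only [pocketStart_cons_succ, List.getD_cons_succ] at h₁ h₂
      by_cases hb : b ≤ x + 1
      · exact Or.inl hb
      · exact Or.inr ⟨by omega, q, by omega, by omega, by omega⟩
  · rintro (hb | ⟨ha, q, hq, h₁, h₂⟩)
    · exact ⟨0, by omega, by simp [pocketStart_zero], by simp [pocketStart_zero, hb]⟩
    · refine ⟨q + 1, by omega, ?_, ?_⟩ <;>
        simp only [pocketStart_cons_succ, List.getD_cons_succ] <;> omega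

theorem mem_convexVerts_cons :
    v ∈ convexVerts (x :: L) ↔ v = 0 ∨ ∃ w ∈ convexVerts L, x + 1 + w = v := by
  simp only [convexVerts, mem_insert, mem_image]

theorem zero_mem_convexVerts : 0 ∈ convexVerts L := by
  cases L <;> simp [convexVerts]

theorem pocketStart_length_mem_convexVerts : pocketStart L L.length ∈ convexVerts L := by
  induction L with
  | nil => simp [convexVerts, pocketStart_zero]
  | cons x L ih => exact mem_convexVerts_cons.2 (Or.inr ⟨_, ih, (pocketStart_cons_succ _).symm⟩)

theorem le_pocketStart_length_of_mem_convexVerts (hv : v ∈ convexVerts L) :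
    v ≤ pocketStart L L.length := by
  induction L generalizing v with
  | nil => simp_all [convexVerts]
  | cons x L ih =>
    rw [List.length_cons, pocketStart_cons_succ]
    rcases mem_convexVerts_cons.1 hv with rfl | ⟨w, hw, rfl⟩
    · omega
    · have := ih hw
      omega

theorem samePocket_iff_forall_convexVerts (hab : a < b) (hb : b < numVerts L) :
    SamePocket L a b ↔ ∀ c ∈ convexVerts L, ¬ (a < c ∧ c < b) := by
  induction L generalizing a b with
  | nil => simp [numVerts, pocketStart_zero] at hb; omega
  | cons x L ih =>
    rw [numVerts_cons] at hb
    simp only [samePocket_cons_iff, mem_convexVerts_cons, forall_eq_or_imp, forall_exists_index,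
      and_imp, forall_apply_eq_imp_iff₂]
    by_cases hbx : b ≤ x + 1
    · simp only [hbx, true_or, true_iff]
      exact ⟨by omega, fun w _ ↦ by omega⟩
    by_cases hax : x + 1 ≤ a
    · simp only [hbx, hax, false_or, true_and,
        ih (a := a - (x + 1)) (b := b - (x + 1)) (by omega) (by omega)]
      exact ⟨fun h ↦ ⟨by omega, fun w hw ↦ by have := h w hw; omega⟩,
        fun h w hw ↦ by have := h.2 w hw; omega⟩
    · simp only [hbx, hax, false_or, false_and, false_iff, not_and, not_forall, not_not,
        exists_prop]
      exact fun _ ↦ ⟨0, zero_mem_convexVerts, by omega, by omega⟩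

theorem admissibleEdge_iff_isChord {e : ℕ × ℕ} :
    AdmissibleEdge L e ↔ IsChord (numVerts L) (convexVerts L) e := by
  unfold AdmissibleEdge IsChord
  refine and_congr_right fun hlen ↦ and_congr_right fun hn ↦ ?_
  rw [samePocket_iff_forall_convexVerts (by omega) hn]
  simp only [not_forall, not_not, exists_prop]

theorem pocketGraphCount_eq_card_chordGraphs :
    pocketGraphCount L = (chordGraphs (numVerts L) (convexVerts L)).card := by
  unfold pocketGraphCount chordGraphs
  simp only [admissibleEdge_iff_isChord]

theorem mem_convexVerts_append : v ∈ convexVerts (A ++ L) ↔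
    v ∈ convexVerts A ∨ ∃ w ∈ convexVerts L, pocketStart A A.length + w = v := by
  induction A generalizing v with
  | nil => simpa [convexVerts, pocketStart_zero] using fun h ↦ h ▸ zero_mem_convexVerts
  | cons x A ih =>
    simp only [List.cons_append, mem_convexVerts_cons, ih, List.length_cons, pocketStart_cons_succ]
    constructor
    · rintro (rfl | ⟨u, hu | ⟨w, hw, rfl⟩, rfl⟩)
      exacts [Or.inl (Or.inl rfl), Or.inl (Or.inr ⟨u, hu, rfl⟩), Or.inr ⟨w, hw, by omega⟩]
    · rintro ((rfl | ⟨u, hu, rfl⟩) | ⟨w, hw, rfl⟩)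
      exacts [Or.inl rfl, Or.inr ⟨u, Or.inl hu, rfl⟩, Or.inr ⟨_, Or.inr ⟨w, hw, rfl⟩, by omega⟩]

theorem mem_convexVerts_append_cons_cons :
    v ∈ convexVerts (A ++ x :: y :: B) ↔ v ∈ convexVerts A ∨
      v = pocketStart A A.length + x + 1 ∨
      ∃ w ∈ convexVerts B, v = pocketStart A A.length + x + y + 2 + w := by
  simp only [mem_convexVerts_append, mem_convexVerts_cons]
  constructor
  · rintro (hv | ⟨_, rfl | ⟨_, rfl | ⟨w, hw, rfl⟩, rfl⟩, rfl⟩)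
    · exact Or.inl hv
    · exact Or.inl (by simpa using pocketStart_length_mem_convexVerts)
    · exact Or.inr (Or.inl (by omega))
    · exact Or.inr (Or.inr ⟨w, hw, by omega⟩)
  · rintro (hv | rfl | ⟨w, hw, rfl⟩)
    · exact Or.inl hv
    · exact Or.inr ⟨_, Or.inr ⟨0, Or.inl rfl, rfl⟩, by omega⟩
    · exact Or.inr ⟨_, Or.inr ⟨_, Or.inr ⟨w, hw, rfl⟩, rfl⟩, by omega⟩

end Pockets

theorem pocketGraphCount_le_swap (A B : List ℕ) (x y : ℕ) :
    pocketGraphCount (A ++ x :: y :: B) ≤ pocketGraphCount (A ++ y :: x :: B) := by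
  set s := pocketStart A A.length
  have hsA : s ∈ convexVerts A := pocketStart_length_mem_convexVerts
  have hA : ∀ c ∈ convexVerts A, c ≤ s := fun c ↦ le_pocketStart_length_of_mem_convexVerts
  have hB : 0 ∈ convexVerts B := zero_mem_convexVerts
  have hn : numVerts (A ++ x :: y :: B) = s + x + y + 2 + numVerts B := by
    simp only [numVerts_append, numVerts_cons]; omega
  have hn' : numVerts (A ++ y :: x :: B) = s + x + y + 2 + numVerts B := by
    simp only [numVerts_append, numVerts_cons]; omega
  rw [pocketGraphCount_eq_card_chordGraphs, pocketGraphCount_eq_card_chordGraphs, hn, hn']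
  refine card_chordGraphs_le (s := s) (t := s + x + y + 2) (by simp [numVerts])
    (mem_convexVerts_append_cons_cons.2 (Or.inl hsA))
    (mem_convexVerts_append_cons_cons.2 (Or.inr (Or.inr ⟨0, hB, by omega⟩))) ?_ ?_ <;>
    intro c hc <;> simp only [mem_convexVerts_append_cons_cons] at hc ⊢
  · intro hcw
    rcases hc with hc | rfl | ⟨w, hw, rfl⟩
    · exact Or.inl hc
    · omega
    · exact Or.inr (Or.inr ⟨w, hw, by omega⟩)
  · intro hsc hct
    rcases hc with hc | rfl | ⟨w, hw, rfl⟩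
    · have := hA c hc
      exact Or.inr (Or.inr ⟨0, hB, by omega⟩)
    · exact Or.inr (Or.inl (by omega))
    · exact Or.inl (by rwa [show s + (s + x + y + 2) - (s + x + y + 2 + w) = s by omega])

/-- Swapping two adjacent pockets of an almost convex polygon does not change the
number of crossing-free geometric graphs drawable inside it. -/
theorem pocketGraphCount_swap (A B : List ℕ) (x y : ℕ) :
    pocketGraphCount (A ++ x :: y :: B) = pocketGraphCount (A ++ y :: x :: B) :=
  (pocketGraphCount_le_swap A B x y).antisymm (pocketGraphCount_le_swap A B y x)
end

section
/- In the generating-tree construction for plane graphs on convex points, the parent map is well-defined and surjective onto graphs on one fewer vertex: for every boundary-edge-free crossing-free graph G' on points p₁,…,p_i in convex position and every valid production step, the produced graph G on p₁,…,p_{i+1} is crossing-free and has G' as its parent; moreover, each graph on i+1 points has a unique parent, so the total number of graphs on n points equals the number of leaves at depth n−1 of the generating tree rooted at the single graph on one point. -/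
open Finset

/-- A boundary-edge-free crossing-free graph on points `0, …, n-1` in convex
position (labeled clockwise): edges `(a,b)` satisfy `a + 2 ≤ b < n` (no edge
between consecutive hull points) and no two edges cross. -/
def GTValid (n : ℕ) (E : Finset (ℕ × ℕ)) : Prop :=
  (∀ e ∈ E, e.1 + 2 ≤ e.2 ∧ e.2 < n) ∧ ∀ e ∈ E, ∀ f ∈ E, ¬ ChordsCross e f

instance (n : ℕ) (E : Finset (ℕ × ℕ)) : Decidable (GTValid n E) := by
  unfold GTValid; infer_instance

/-- The set of boundary-edge-free crossing-free graphs on `n` convex points. -/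
def gtGraphs (n : ℕ) : Finset (Finset (ℕ × ℕ)) :=
  ((range n ×ˢ range n).powerset).filter (fun E => GTValid n E)

/-- The parent of a graph on `n` convex points: contract the last vertex `n-1`
onto `n-2` (replacing each edge `(a, n-1)` by `(a, n-2)`), discarding loops,
duplicates and the resulting boundary edge `(n-3, n-2)` if it appears. -/
def parentGraph (n : ℕ) (E : Finset (ℕ × ℕ)) : Finset (ℕ × ℕ) :=
  (E.image (fun e => if e.2 = n - 1 then (e.1, n - 2) else e)).filter
    (fun e => e.1 + 2 ≤ e.2)

lemma mem_gtGraphs {n : ℕ} {E : Finset (ℕ × ℕ)} : E ∈ gtGraphs n ↔ GTValid n E := by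
  constructor
  · intro h; exact (Finset.mem_filter.mp h).2
  · intro h
    refine Finset.mem_filter.mpr ⟨Finset.mem_powerset.mpr ?_, h⟩
    intro e he
    have := h.1 e he
    simp only [Finset.mem_product, Finset.mem_range]
    omega

lemma parent_mem {n : ℕ} {E : Finset (ℕ × ℕ)} {e : ℕ × ℕ} (he : e ∈ parentGraph n E) :
    ∃ e₀ ∈ E, e.1 + 2 ≤ e.2 ∧ e.1 = e₀.1 ∧
      ((e.2 = e₀.2 ∧ e₀.2 ≠ n - 1) ∨ (e₀.2 = n - 1 ∧ e.2 = n - 2)) := by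
  simp only [parentGraph, Finset.mem_filter, Finset.mem_image] at he
  obtain ⟨⟨e₀, he₀, hmap⟩, hfil⟩ := he
  refine ⟨e₀, he₀, hfil, ?_⟩
  by_cases h2 : e₀.2 = n - 1
  · rw [if_pos h2] at hmap
    exact ⟨by rw [← hmap], Or.inr ⟨h2, by rw [← hmap]⟩⟩
  · rw [if_neg h2] at hmap
    subst hmap
    exact ⟨rfl, Or.inl ⟨rfl, h2⟩⟩

lemma valid_parent (n : ℕ) (hn : 2 ≤ n) (E : Finset (ℕ × ℕ)) (h : GTValid n E) :
    GTValid (n - 1) (parentGraph n E) := by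
  obtain ⟨hb, hc⟩ := h
  constructor
  · intro e he
    obtain ⟨e₀, he₀, hfil, h1, h2⟩ := parent_mem he
    have := hb e₀ he₀
    omega
  · intro e he f hf
    obtain ⟨e₀, he₀, hef, he1, he2⟩ := parent_mem he
    obtain ⟨f₀, hf₀, hff, hf1, hf2⟩ := parent_mem hf
    have hbe := hb e₀ he₀
    have hbf := hb f₀ hf₀
    have hnc := hc e₀ he₀ f₀ hf₀
    unfold ChordsCross at hnc ⊢
    omega

lemma parent_fix (n : ℕ) (hn : 2 ≤ n) (E' : Finset (ℕ × ℕ)) (h : GTValid (n - 1) E') :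
    parentGraph n E' = E' := by
  unfold parentGraph
  ext e
  simp only [Finset.mem_filter, Finset.mem_image]
  constructor
  · rintro ⟨⟨e₀, he₀, hmap⟩, _⟩
    have := h.1 e₀ he₀
    rw [if_neg (by omega)] at hmap
    subst hmap; exact he₀
  · intro he
    have := h.1 e he
    exact ⟨⟨e, he, if_neg (by omega)⟩, this.1⟩

/-- The generating-tree parent map is well-defined and surjective: the parent of a
boundary-edge-free crossing-free graph on `n` convex points is such a graph on
`n-1` points, every graph on `n-1` points is the parent of some produced graph on
`n` points, and since each graph has a unique parent, the number of graphs on `n`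
points is the sum over the graphs on `n-1` points of the number of their children;
the tree is rooted at the single (empty) graph on one point. -/
theorem generating_tree_parent (n : ℕ) (hn : 2 ≤ n) :
    (∀ E, GTValid n E → GTValid (n - 1) (parentGraph n E)) ∧
      (∀ E', GTValid (n - 1) E' →
        ∃ E, GTValid n E ∧ parentGraph n E = E') ∧
      (gtGraphs n).card
          = ∑ E' ∈ gtGraphs (n - 1),
              ((gtGraphs n).filter (fun E => parentGraph n E = E')).card ∧
      (gtGraphs 1).card = 1 := by
  refine ⟨fun E hE => valid_parent n hn E hE, ?_, ?_, ?_⟩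
  · intro E' hE'
    refine ⟨E', ⟨fun e he => ?_, hE'.2⟩, parent_fix n hn E' hE'⟩
    have := hE'.1 e he
    omega
  · exact Finset.card_eq_sum_card_fiberwise fun E hE =>
      mem_gtGraphs.mpr (valid_parent n hn E (mem_gtGraphs.mp hE))
  · decide
end
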